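/- arXiv:2505.03908 — 2 statements merged into one kernel-verified Lean document; each statement's English description precedes it below -/
import Mathlib

section
/- Let N = 2n ≥ 2 be even, R ≥ 3, and S = ⌊R/3⌋. For every randomized online algorithm on C_{N,R}, i.e., every probability mass function μ over deterministic online algorithms, there exists a subset B ⊆ {1,…,S} such that the expected congestion (over A drawn from μ) of the routing induced by A on the sequence S_B is at least 2 − 1/2^S. -/
open Finset

/-- A unit-demand flow in the Clos network `C_{N,R}`. -/
structure UFlow (N R : ℕ) where
  inp : Fin R
  src : Fin N
  out : Fin R
  dst : Fin N
  deriving DecidableEq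

/-- The routing induced by a deterministic online algorithm `A` on a sequence `L` of
flows: the flow at position `t` is assigned the middle switch `A (f₁, …, f_t)`. -/
def assign {N R : ℕ} (A : List (UFlow N R) → Fin N) (L : List (UFlow N R)) :
    Fin L.length → Fin N :=
  fun t => A (L.take (t.1 + 1))

/-- Number of flows of `L` routed by the induced routing through input link
`I_i M_mm`. -/
def inCount {N R : ℕ} (A : List (UFlow N R) → Fin N) (L : List (UFlow N R))
    (i : Fin R) (mm : Fin N) : ℕ :=
  (Finset.univ.filter fun t : Fin L.length =>
    (L.get t).inp = i ∧ assign A L t = mm).card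

/-- Number of flows of `L` routed by the induced routing through output link
`M_mm O_i`. -/
def outCount {N R : ℕ} (A : List (UFlow N R) → Fin N) (L : List (UFlow N R))
    (i : Fin R) (mm : Fin N) : ℕ :=
  (Finset.univ.filter fun t : Fin L.length =>
    (L.get t).out = i ∧ assign A L t = mm).card

/-- The congestion (a natural number, all demands being `1`) of the routing induced
by the online algorithm `A` on the sequence `L`: the maximum over all links of the
number of flows routed through that link. -/
def congA {N R : ℕ} (A : List (UFlow N R) → Fin N) (L : List (UFlow N R)) : ℕ :=
  Finset.univ.sup fun p : Fin R × Fin N =>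
    max (inCount A L p.1 p.2) (outCount A L p.1 p.2)

/-- The translation `X_j` of sequence `X` to the `j`-th block of `C_{2n,R}`
(input switches `3j, 3j+1, 3j+2`, output switches `3j, 3j+1`, 0-based):
`n` flows `I₁ → O₁` and `n` flows `I₂ → O₂` (the prefix), then `n` flows
`I₁ → O₂`; flows sharing an input (output) switch use pairwise distinct sources
(destinations). -/
def blkX (n R : ℕ) (j : Fin (R / 3)) : List (UFlow (2 * n) R) :=
  ((List.finRange n).map fun k =>
    (⟨⟨3 * j.1, by have := j.2; omega⟩, ⟨k.1, by have := k.2; omega⟩,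
      ⟨3 * j.1, by have := j.2; omega⟩, ⟨k.1, by have := k.2; omega⟩⟩ :
      UFlow (2 * n) R)) ++
  ((List.finRange n).map fun k =>
    (⟨⟨3 * j.1 + 1, by have := j.2; omega⟩, ⟨k.1, by have := k.2; omega⟩,
      ⟨3 * j.1 + 1, by have := j.2; omega⟩, ⟨k.1, by have := k.2; omega⟩⟩ :
      UFlow (2 * n) R)) ++
  ((List.finRange n).map fun k =>
    (⟨⟨3 * j.1, by have := j.2; omega⟩, ⟨n + k.1, by have := k.2; omega⟩,
      ⟨3 * j.1 + 1, by have := j.2; omega⟩, ⟨n + k.1, by have := k.2; omega⟩⟩ :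
      UFlow (2 * n) R))

/-- The translation `Y_j` of sequence `Y` to the `j`-th block of `C_{2n,R}`:
the prefix `X1`, then `n` flows `I₃ → O₁` and `n` flows `I₃ → O₂`. -/
def blkY (n R : ℕ) (j : Fin (R / 3)) : List (UFlow (2 * n) R) :=
  ((List.finRange n).map fun k =>
    (⟨⟨3 * j.1, by have := j.2; omega⟩, ⟨k.1, by have := k.2; omega⟩,
      ⟨3 * j.1, by have := j.2; omega⟩, ⟨k.1, by have := k.2; omega⟩⟩ :
      UFlow (2 * n) R)) ++
  ((List.finRange n).map fun k =>
    (⟨⟨3 * j.1 + 1, by have := j.2; omega⟩, ⟨k.1, by have := k.2; omega⟩,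
      ⟨3 * j.1 + 1, by have := j.2; omega⟩, ⟨k.1, by have := k.2; omega⟩⟩ :
      UFlow (2 * n) R)) ++
  ((List.finRange n).map fun k =>
    (⟨⟨3 * j.1 + 2, by have := j.2; omega⟩, ⟨k.1, by have := k.2; omega⟩,
      ⟨3 * j.1, by have := j.2; omega⟩, ⟨n + k.1, by have := k.2; omega⟩⟩ :
      UFlow (2 * n) R)) ++
  ((List.finRange n).map fun k =>
    (⟨⟨3 * j.1 + 2, by have := j.2; omega⟩, ⟨n + k.1, by have := k.2; omega⟩,
      ⟨3 * j.1 + 1, by have := j.2; omega⟩, ⟨n + k.1, by have := k.2; omega⟩⟩ :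
      UFlow (2 * n) R))

/-- The supersequence `S_B` for a subset `B` of the `S = ⌊R/3⌋` blocks: the
concatenation, for `j = 1, …, S` in order, of `Y_j` if `j ∈ B` and of `X_j`
otherwise. -/
def seqB (n R : ℕ) (B : Finset (Fin (R / 3))) : List (UFlow (2 * n) R) :=
  (List.finRange (R / 3)).flatMap fun j => if j ∈ B then blkY n R j else blkX n R j

/-- the middle switch assigned to the first occurrence of `f` in `L` -/
def midOf {N R : ℕ} (A : List (UFlow N R) → Fin N) (L : List (UFlow N R))
    (f : UFlow N R) : Fin N :=
  A (L.take (L.idxOf f + 1))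

lemma midOf_append {N R : ℕ} (A : List (UFlow N R) → Fin N)
    {P Q : List (UFlow N R)} {f : UFlow N R} (hf : f ∈ P) :
    midOf A (P ++ Q) f = midOf A P f := by
  unfold midOf
  rw [List.idxOf_append_of_mem hf,
    List.take_append_of_le_length (List.idxOf_lt_length_iff.2 hf)]

lemma inCount_le_congA {N R : ℕ} (A : List (UFlow N R) → Fin N)
    (L : List (UFlow N R)) (i : Fin R) (m : Fin N) :
    inCount A L i m ≤ congA A L :=
  le_trans (le_max_left _ _) (Finset.le_sup (f := fun p : Fin R × Fin N =>
    max (inCount A L p.1 p.2) (outCount A L p.1 p.2)) (Finset.mem_univ (i, m)))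

lemma outCount_le_congA {N R : ℕ} (A : List (UFlow N R) → Fin N)
    (L : List (UFlow N R)) (i : Fin R) (m : Fin N) :
    outCount A L i m ≤ congA A L :=
  le_trans (le_max_right _ _) (Finset.le_sup (f := fun p : Fin R × Fin N =>
    max (inCount A L p.1 p.2) (outCount A L p.1 p.2)) (Finset.mem_univ (i, m)))

lemma midOf_ne_inp {N R : ℕ} {A : List (UFlow N R) → Fin N}
    {L : List (UFlow N R)} (hL : congA A L ≤ 1) {f g : UFlow N R}
    (hf : f ∈ L) (hg : g ∈ L) (hfg : f ≠ g) (h : f.inp = g.inp) :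
    midOf A L f ≠ midOf A L g := by
  intro hm
  have hfl := List.idxOf_lt_length_iff.2 hf
  have hgl := List.idxOf_lt_length_iff.2 hg
  set t : Fin L.length := ⟨L.idxOf f, hfl⟩
  set t' : Fin L.length := ⟨L.idxOf g, hgl⟩
  have hget : L.get t = f := List.getElem_idxOf hfl
  have hget' : L.get t' = g := List.getElem_idxOf hgl
  have htt : t ≠ t' := fun e => hfg (hget ▸ hget' ▸ e ▸ rfl)
  have ht : t ∈ Finset.univ.filter fun s : Fin L.length =>
      (L.get s).inp = f.inp ∧ assign A L s = midOf A L f := by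
    exact Finset.mem_filter.2 ⟨Finset.mem_univ _, ⟨by rw [hget], rfl⟩⟩
  have ht' : t' ∈ Finset.univ.filter fun s : Fin L.length =>
      (L.get s).inp = f.inp ∧ assign A L s = midOf A L f := by
    refine Finset.mem_filter.2 ⟨Finset.mem_univ _, ⟨by rw [hget', h], ?_⟩⟩
    show A (L.take (L.idxOf g + 1)) = _
    exact (hm ▸ rfl)
  have h2 : 2 ≤ inCount A L f.inp (midOf A L f) := by
    rw [inCount]
    exact Finset.one_lt_card.2 ⟨t, ht, t', ht', htt⟩
  have := le_trans h2 (le_trans (inCount_le_congA A L _ _) hL)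
  omega

lemma midOf_ne_out {N R : ℕ} {A : List (UFlow N R) → Fin N}
    {L : List (UFlow N R)} (hL : congA A L ≤ 1) {f g : UFlow N R}
    (hf : f ∈ L) (hg : g ∈ L) (hfg : f ≠ g) (h : f.out = g.out) :
    midOf A L f ≠ midOf A L g := by
  intro hm
  have hfl := List.idxOf_lt_length_iff.2 hf
  have hgl := List.idxOf_lt_length_iff.2 hg
  set t : Fin L.length := ⟨L.idxOf f, hfl⟩
  set t' : Fin L.length := ⟨L.idxOf g, hgl⟩
  have hget : L.get t = f := List.getElem_idxOf hfl
  have hget' : L.get t' = g := List.getElem_idxOf hgl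
  have htt : t ≠ t' := fun e => hfg (hget ▸ hget' ▸ e ▸ rfl)
  have ht : t ∈ Finset.univ.filter fun s : Fin L.length =>
      (L.get s).out = f.out ∧ assign A L s = midOf A L f := by
    exact Finset.mem_filter.2 ⟨Finset.mem_univ _, ⟨by rw [hget], rfl⟩⟩
  have ht' : t' ∈ Finset.univ.filter fun s : Fin L.length =>
      (L.get s).out = f.out ∧ assign A L s = midOf A L f := by
    refine Finset.mem_filter.2 ⟨Finset.mem_univ _, ⟨by rw [hget', h], ?_⟩⟩
    show A (L.take (L.idxOf g + 1)) = _
    exact (hm ▸ rfl)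
  have h2 : 2 ≤ outCount A L f.out (midOf A L f) := by
    rw [outCount]
    exact Finset.one_lt_card.2 ⟨t, ht, t', ht', htt⟩
  have := le_trans h2 (le_trans (outCount_le_congA A L _ _) hL)
  omega

lemma one_le_congA {N R : ℕ} (A : List (UFlow N R) → Fin N)
    {L : List (UFlow N R)} (hL : L ≠ []) : 1 ≤ congA A L := by
  have hlen : 0 < L.length := List.length_pos_iff.2 hL
  set t : Fin L.length := ⟨0, hlen⟩
  have : t ∈ Finset.univ.filter fun s : Fin L.length =>
      (L.get s).inp = (L.get t).inp ∧ assign A L s = assign A L t := by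
    simp
  have h1 : 1 ≤ inCount A L (L.get t).inp (assign A L t) :=
    Finset.card_pos.2 ⟨t, this⟩
  exact le_trans h1 (inCount_le_congA A L _ _)

/-! named block flows -/

def fA (n R : ℕ) (j : Fin (R / 3)) (k : Fin n) : UFlow (2 * n) R :=
  ⟨⟨3 * j.1, by have := j.2; omega⟩, ⟨k.1, by have := k.2; omega⟩,
    ⟨3 * j.1, by have := j.2; omega⟩, ⟨k.1, by have := k.2; omega⟩⟩

def fB (n R : ℕ) (j : Fin (R / 3)) (k : Fin n) : UFlow (2 * n) R :=
  ⟨⟨3 * j.1 + 1, by have := j.2; omega⟩, ⟨k.1, by have := k.2; omega⟩,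
    ⟨3 * j.1 + 1, by have := j.2; omega⟩, ⟨k.1, by have := k.2; omega⟩⟩

def fX (n R : ℕ) (j : Fin (R / 3)) (k : Fin n) : UFlow (2 * n) R :=
  ⟨⟨3 * j.1, by have := j.2; omega⟩, ⟨n + k.1, by have := k.2; omega⟩,
    ⟨3 * j.1 + 1, by have := j.2; omega⟩, ⟨n + k.1, by have := k.2; omega⟩⟩

def fY (n R : ℕ) (j : Fin (R / 3)) (k : Fin n) : UFlow (2 * n) R :=
  ⟨⟨3 * j.1 + 2, by have := j.2; omega⟩, ⟨k.1, by have := k.2; omega⟩,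
    ⟨3 * j.1, by have := j.2; omega⟩, ⟨n + k.1, by have := k.2; omega⟩⟩

def fY' (n R : ℕ) (j : Fin (R / 3)) (k : Fin n) : UFlow (2 * n) R :=
  ⟨⟨3 * j.1 + 2, by have := j.2; omega⟩, ⟨n + k.1, by have := k.2; omega⟩,
    ⟨3 * j.1 + 1, by have := j.2; omega⟩, ⟨n + k.1, by have := k.2; omega⟩⟩

lemma blkX_eq (n R : ℕ) (j : Fin (R / 3)) :
    blkX n R j = ((List.finRange n).map (fA n R j) ++ (List.finRange n).map (fB n R j))
      ++ (List.finRange n).map (fX n R j) := rfl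

lemma blkY_eq (n R : ℕ) (j : Fin (R / 3)) :
    blkY n R j = (((List.finRange n).map (fA n R j) ++ (List.finRange n).map (fB n R j))
      ++ (List.finRange n).map (fY n R j)) ++ (List.finRange n).map (fY' n R j) := rfl

lemma seqB_decomp (n R : ℕ) (B : Finset (Fin (R / 3))) (j : Fin (R / 3)) :
    ∃ T, seqB n R B =
      ((((List.finRange (R / 3)).take j.1).flatMap
        fun i => if i ∈ B then blkY n R i else blkX n R i) ++
      ((if j ∈ B then blkY n R j else blkX n R j) ++ T)) := by
  refine ⟨((List.finRange (R / 3)).drop (j.1 + 1)).flatMap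
      fun i => if i ∈ B then blkY n R i else blkX n R i, ?_⟩
  have hlt : j.1 < (List.finRange (R / 3)).length := by simp
  have hj : (List.finRange (R / 3))[j.1] = j := by
    simp [Fin.ext_iff]
  conv_lhs => rw [seqB, ← List.take_append_drop j.1 (List.finRange (R / 3)),
    List.drop_eq_getElem_cons hlt, hj]
  rw [List.flatMap_append, List.flatMap_cons]

lemma pre_eq (n R : ℕ) (B B' : Finset (Fin (R / 3))) (j : Fin (R / 3))
    (hpre : ∀ i : Fin (R / 3), i.1 < j.1 → (i ∈ B ↔ i ∈ B')) :
    (((List.finRange (R / 3)).take j.1).flatMap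
        fun i => if i ∈ B then blkY n R i else blkX n R i) =
    (((List.finRange (R / 3)).take j.1).flatMap
        fun i => if i ∈ B' then blkY n R i else blkX n R i) := by
  rw [List.flatMap_def, List.flatMap_def]
  congr 1
  apply List.map_congr_left
  intro i hi
  have : i.1 < j.1 := by
    rw [List.mem_take_iff_getElem] at hi
    obtain ⟨k, hk, hki⟩ := hi
    simp [Fin.ext_iff] at hki
    simp at hk
    omega
  simp only [hpre i this]

lemma key {n R : ℕ} (hn : 1 ≤ n) (A : List (UFlow (2 * n) R) → Fin (2 * n))
    (B B' : Finset (Fin (R / 3))) (j : Fin (R / 3)) (hj : j ∈ B) (hj' : j ∉ B')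
    (hpre : ∀ i : Fin (R / 3), i.1 < j.1 → (i ∈ B ↔ i ∈ B'))
    (h1 : congA A (seqB n R B) ≤ 1) (h2 : congA A (seqB n R B') ≤ 1) : False := by
  obtain ⟨T, hT⟩ := seqB_decomp n R B j
  obtain ⟨T', hT'⟩ := seqB_decomp n R B' j
  rw [if_pos hj, pre_eq n R B B' j hpre] at hT
  rw [if_neg hj'] at hT'
  set Pre := ((List.finRange (R / 3)).take j.1).flatMap
    (fun i => if i ∈ B' then blkY n R i else blkX n R i) with hPre
  set la := (List.finRange n).map (fA n R j) with hla
  set lb := (List.finRange n).map (fB n R j) with hlb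
  set lx := (List.finRange n).map (fX n R j) with hlx
  set ly := (List.finRange n).map (fY n R j) with hly
  set ly' := (List.finRange n).map (fY' n R j) with hly'
  set P0 := Pre ++ (la ++ lb) with hP0
  have hLB : seqB n R B = P0 ++ (ly ++ (ly' ++ T)) := by
    rw [hT, blkY_eq n R j, ← hla, ← hlb, ← hly, ← hly']
    simp [hP0, List.append_assoc]
  have hLB' : seqB n R B' = P0 ++ (lx ++ T') := by
    rw [hT', blkX_eq n R j, ← hla, ← hlb, ← hlx]
    simp [hP0, List.append_assoc]
  -- memberships
  have haP0 : ∀ k, fA n R j k ∈ P0 := fun k =>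
    List.mem_append_right Pre (List.mem_append_left lb
      (List.mem_map.2 ⟨k, List.mem_finRange k, rfl⟩))
  have hbP0 : ∀ k, fB n R j k ∈ P0 := fun k =>
    List.mem_append_right Pre (List.mem_append_right la
      (List.mem_map.2 ⟨k, List.mem_finRange k, rfl⟩))
  have haLB : ∀ k, fA n R j k ∈ seqB n R B := fun k => by
    rw [hLB]; exact List.mem_append_left _ (haP0 k)
  have haLB' : ∀ k, fA n R j k ∈ seqB n R B' := fun k => by
    rw [hLB']; exact List.mem_append_left _ (haP0 k)
  have hbLB : ∀ k, fB n R j k ∈ seqB n R B := fun k => by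
    rw [hLB]; exact List.mem_append_left _ (hbP0 k)
  have hbLB' : ∀ k, fB n R j k ∈ seqB n R B' := fun k => by
    rw [hLB']; exact List.mem_append_left _ (hbP0 k)
  have hxLB' : ∀ k, fX n R j k ∈ seqB n R B' := fun k => by
    rw [hLB']
    exact List.mem_append_right _ (List.mem_append_left _
      (List.mem_map.2 ⟨k, List.mem_finRange k, rfl⟩))
  have hyLB : ∀ k, fY n R j k ∈ seqB n R B := fun k => by
    rw [hLB]
    exact List.mem_append_right _ (List.mem_append_left _
      (List.mem_map.2 ⟨k, List.mem_finRange k, rfl⟩))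
  have hy'LB : ∀ k, fY' n R j k ∈ seqB n R B := fun k => by
    rw [hLB]
    exact List.mem_append_right _ (List.mem_append_right _
      (List.mem_append_left _ (List.mem_map.2 ⟨k, List.mem_finRange k, rfl⟩)))
  -- middle switches
  set m1 : Fin n → Fin (2 * n) := fun k => midOf A P0 (fA n R j k) with hm1
  set m2 : Fin n → Fin (2 * n) := fun k => midOf A P0 (fB n R j k) with hm2
  set mx : Fin n → Fin (2 * n) := fun k => midOf A (seqB n R B') (fX n R j k) with hmx
  set my : Fin n → Fin (2 * n) := fun k => midOf A (seqB n R B) (fY n R j k) with hmy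
  set my' : Fin n → Fin (2 * n) := fun k => midOf A (seqB n R B) (fY' n R j k) with hmy'
  have hm1B : ∀ k, midOf A (seqB n R B) (fA n R j k) = m1 k := fun k => by
    rw [hLB]; exact midOf_append A (haP0 k)
  have hm1B' : ∀ k, midOf A (seqB n R B') (fA n R j k) = m1 k := fun k => by
    rw [hLB']; exact midOf_append A (haP0 k)
  have hm2B : ∀ k, midOf A (seqB n R B) (fB n R j k) = m2 k := fun k => by
    rw [hLB]; exact midOf_append A (hbP0 k)
  have hm2B' : ∀ k, midOf A (seqB n R B') (fB n R j k) = m2 k := fun k => by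
    rw [hLB']; exact midOf_append A (hbP0 k)
  -- flow disequalities
  have hne_aa : ∀ k k' : Fin n, k ≠ k' → fA n R j k ≠ fA n R j k' := by
    intro k k' h hc
    have hv : k.1 ≠ k'.1 := fun e => h (Fin.ext e)
    simp [fA, UFlow.mk.injEq, Fin.ext_iff] at hc <;> omega
  have hne_bb : ∀ k k' : Fin n, k ≠ k' → fB n R j k ≠ fB n R j k' := by
    intro k k' h hc
    have hv : k.1 ≠ k'.1 := fun e => h (Fin.ext e)
    simp [fB, UFlow.mk.injEq, Fin.ext_iff] at hc <;> omega
  have hne_xx : ∀ k k' : Fin n, k ≠ k' → fX n R j k ≠ fX n R j k' := by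
    intro k k' h hc
    have hv : k.1 ≠ k'.1 := fun e => h (Fin.ext e)
    simp [fX, UFlow.mk.injEq, Fin.ext_iff] at hc <;> omega
  have hne_yy : ∀ k k' : Fin n, k ≠ k' → fY n R j k ≠ fY n R j k' := by
    intro k k' h hc
    have hv : k.1 ≠ k'.1 := fun e => h (Fin.ext e)
    simp [fY, UFlow.mk.injEq, Fin.ext_iff] at hc <;> omega
  have hne_y'y' : ∀ k k' : Fin n, k ≠ k' → fY' n R j k ≠ fY' n R j k' := by
    intro k k' h hc
    have hv : k.1 ≠ k'.1 := fun e => h (Fin.ext e)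
    simp [fY', UFlow.mk.injEq, Fin.ext_iff] at hc <;> omega
  have hne_ax : ∀ k k' : Fin n, fA n R j k ≠ fX n R j k' := by
    intro k k' hc
    have hk := k.2
    simp [fA, fX, UFlow.mk.injEq, Fin.ext_iff] at hc <;> omega
  have hne_bx : ∀ k k' : Fin n, fB n R j k ≠ fX n R j k' := by
    intro k k' hc
    have hk := k.2
    simp [fB, fX, UFlow.mk.injEq, Fin.ext_iff] at hc <;> omega
  have hne_ay : ∀ k k' : Fin n, fA n R j k ≠ fY n R j k' := by
    intro k k' hc
    simp [fA, fY, UFlow.mk.injEq, Fin.ext_iff] at hc <;> omega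
  have hne_by' : ∀ k k' : Fin n, fB n R j k ≠ fY' n R j k' := by
    intro k k' hc
    have hk := k.2
    simp [fB, fY', UFlow.mk.injEq, Fin.ext_iff] at hc <;> omega
  have hne_yy' : ∀ k k' : Fin n, fY n R j k ≠ fY' n R j k' := by
    intro k k' hc
    have hk := k.2
    simp [fY, fY', UFlow.mk.injEq, Fin.ext_iff] at hc <;> omega
  -- injectivity and disjointness constraints
  have hm1inj : Function.Injective m1 := by
    intro k k' h
    by_contra hne
    exact midOf_ne_inp h2 (haLB' k) (haLB' k') (hne_aa k k' hne) rfl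
      (by rw [hm1B' k, hm1B' k', h])
  have hm2inj : Function.Injective m2 := by
    intro k k' h
    by_contra hne
    exact midOf_ne_inp h2 (hbLB' k) (hbLB' k') (hne_bb k k' hne) rfl
      (by rw [hm2B' k, hm2B' k', h])
  have hmxinj : Function.Injective mx := by
    intro k k' h
    by_contra hne
    exact midOf_ne_inp h2 (hxLB' k) (hxLB' k') (hne_xx k k' hne) rfl h
  have hmyinj : Function.Injective my := by
    intro k k' h
    by_contra hne
    exact midOf_ne_inp h1 (hyLB k) (hyLB k') (hne_yy k k' hne) rfl h
  have hmy'inj : Function.Injective my' := by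
    intro k k' h
    by_contra hne
    exact midOf_ne_inp h1 (hy'LB k) (hy'LB k') (hne_y'y' k k' hne) rfl h
  have hm1mx : ∀ k k', m1 k ≠ mx k' := by
    intro k k'
    rw [← hm1B' k]
    exact midOf_ne_inp h2 (haLB' k) (hxLB' k') (hne_ax k k') rfl
  have hm2mx : ∀ k k', m2 k ≠ mx k' := by
    intro k k'
    rw [← hm2B' k]
    exact midOf_ne_out h2 (hbLB' k) (hxLB' k') (hne_bx k k') rfl
  have hmymy' : ∀ k k', my k ≠ my' k' := by
    intro k k'
    exact midOf_ne_inp h1 (hyLB k) (hy'LB k') (hne_yy' k k') rfl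
  have hm1my : ∀ k k', m1 k ≠ my k' := by
    intro k k'
    rw [← hm1B k]
    exact midOf_ne_out h1 (haLB k) (hyLB k') (hne_ay k k') rfl
  have hm2my' : ∀ k k', m2 k ≠ my' k' := by
    intro k k'
    rw [← hm2B k]
    exact midOf_ne_out h1 (hbLB k) (hy'LB k') (hne_by' k k') rfl
  -- counting
  have hcard : Fintype.card (Fin n ⊕ Fin n) = Fintype.card (Fin (2 * n)) := by
    simp; omega
  have hc1x : Function.Bijective (Sum.elim m1 mx) := by
    refine (Fintype.bijective_iff_injective_and_card _).2 ⟨?_, hcard⟩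
    intro s s' h
    match s, s' with
    | Sum.inl k, Sum.inl k' => exact congrArg Sum.inl (hm1inj h)
    | Sum.inl k, Sum.inr k' => exact absurd h (hm1mx k k')
    | Sum.inr k, Sum.inl k' => exact absurd h.symm (hm1mx k' k)
    | Sum.inr k, Sum.inr k' => exact congrArg Sum.inr (hmxinj h)
  have hcy : Function.Bijective (Sum.elim my my') := by
    refine (Fintype.bijective_iff_injective_and_card _).2 ⟨?_, hcard⟩
    intro s s' h
    match s, s' with
    | Sum.inl k, Sum.inl k' => exact congrArg Sum.inl (hmyinj h)
    | Sum.inl k, Sum.inr k' => exact absurd h (hmymy' k k')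
    | Sum.inr k, Sum.inl k' => exact absurd h.symm (hmymy' k' k)
    | Sum.inr k, Sum.inr k' => exact congrArg Sum.inr (hmy'inj h)
  have hS2 : ∀ k, ∃ k', m1 k' = m2 k := by
    intro k
    obtain ⟨s, hs⟩ := hc1x.2 (m2 k)
    match s, hs with
    | Sum.inl k', hs => exact ⟨k', hs⟩
    | Sum.inr k', hs => exact absurd hs.symm (hm2mx k k')
  have hS1S2 : Finset.image m1 Finset.univ = Finset.image m2 Finset.univ := by
    refine (Finset.eq_of_subset_of_card_le ?_ ?_).symm
    · intro m hm
      obtain ⟨k, _, hk⟩ := Finset.mem_image.1 hm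
      obtain ⟨k', hk'⟩ := hS2 k
      exact Finset.mem_image.2 ⟨k', Finset.mem_univ _, by rw [hk', hk]⟩
    · rw [Finset.card_image_of_injective _ hm1inj,
        Finset.card_image_of_injective _ hm2inj]
  -- final contradiction
  obtain ⟨s, hs⟩ := hcy.2 (m1 ⟨0, hn⟩)
  match s, hs with
  | Sum.inl k', hs => exact absurd hs.symm (hm1my ⟨0, hn⟩ k')
  | Sum.inr k', hs =>
    have : m1 ⟨0, hn⟩ ∈ Finset.image m2 Finset.univ := by
      rw [← hS1S2]
      exact Finset.mem_image.2 ⟨⟨0, hn⟩, Finset.mem_univ _, rfl⟩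
    obtain ⟨k'', _, hk''⟩ := Finset.mem_image.1 this
    exact absurd (hk''.trans hs.symm) (hm2my' k'' k')

lemma unique_good {n R : ℕ} (hn : 1 ≤ n) (A : List (UFlow (2 * n) R) → Fin (2 * n))
    (B B' : Finset (Fin (R / 3))) (h1 : congA A (seqB n R B) ≤ 1)
    (h2 : congA A (seqB n R B') ≤ 1) : B = B' := by
  by_contra hne
  have hsd : (symmDiff B B').Nonempty := by
    rw [Finset.nonempty_iff_ne_empty]
    intro h
    exact hne (symmDiff_eq_bot.1 (by rw [Finset.bot_eq_empty]; exact h))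
  set j := (symmDiff B B').min' hsd with hjdef
  have hjmem : j ∈ symmDiff B B' := Finset.min'_mem _ _
  have hmin : ∀ i : Fin (R / 3), i.1 < j.1 → (i ∈ B ↔ i ∈ B') := by
    intro i hi
    by_contra hcon
    have hi' : i ∈ symmDiff B B' := by
      rw [Finset.mem_symmDiff]; tauto
    have := Finset.min'_le _ _ hi'
    rw [← hjdef] at this
    exact absurd (Fin.lt_def.2 hi) (not_lt.2 this)
  rw [Finset.mem_symmDiff] at hjmem
  rcases hjmem with ⟨hjB, hjB'⟩ | ⟨hjB', hjB⟩
  · exact key hn A B B' j hjB hjB' hmin h1 h2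
  · exact key hn A B' B j hjB' hjB (fun i hi => (hmin i hi).symm) h2 h1

lemma seqB_ne_nil {n R : ℕ} (hn : 1 ≤ n) (hR : 3 ≤ R) (B : Finset (Fin (R / 3))) :
    seqB n R B ≠ [] := by
  have h0 : 0 < R / 3 := by omega
  refine List.ne_nil_of_mem (a := fA n R ⟨0, h0⟩ ⟨0, hn⟩) ?_
  obtain ⟨T, hT⟩ := seqB_decomp n R B ⟨0, h0⟩
  rw [hT]
  refine List.mem_append_right _ (List.mem_append_left _ ?_)
  have hmm : fA n R ⟨0, h0⟩ ⟨0, hn⟩ ∈ (List.finRange n).map (fA n R ⟨0, h0⟩) :=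
    List.mem_map.2 ⟨⟨0, hn⟩, List.mem_finRange _, rfl⟩
  by_cases h : (⟨0, h0⟩ : Fin (R / 3)) ∈ B
  · rw [if_pos h, blkY_eq]
    exact List.mem_append_left _ (List.mem_append_left _ (List.mem_append_left _ hmm))
  · rw [if_neg h, blkX_eq]
    exact List.mem_append_left _ (List.mem_append_left _ hmm)

lemma sum_bound {n R : ℕ} (hn : 1 ≤ n) (hR : 3 ≤ R)
    (A : List (UFlow (2 * n) R) → Fin (2 * n)) :
    2 ^ (R / 3 + 1) - 1 ≤ ∑ B : Finset (Fin (R / 3)), congA A (seqB n R B) := by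
  classical
  set p : Finset (Fin (R / 3)) → Prop := fun B => congA A (seqB n R B) ≤ 1 with hp
  have hG1 : (Finset.univ.filter p).card ≤ 1 := by
    refine Finset.card_le_one.2 (fun B hB B' hB' => ?_)
    exact unique_good hn A B B' (Finset.mem_filter.1 hB).2 (Finset.mem_filter.1 hB').2
  have hsplit : (Finset.univ.filter p).card
      + (Finset.univ.filter fun B => ¬ p B).card = 2 ^ (R / 3) := by
    rw [Finset.card_filter_add_card_filter_not, Finset.card_univ]
    simp [Fintype.card_finset]
  have hstep : ∑ B : Finset (Fin (R / 3)), (if p B then 1 else 2)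
      ≤ ∑ B : Finset (Fin (R / 3)), congA A (seqB n R B) := by
    refine Finset.sum_le_sum (fun B _ => ?_)
    by_cases h : p B
    · rw [if_pos h]; exact one_le_congA A (seqB_ne_nil hn hR B)
    · rw [if_neg h]; omega
  refine le_trans ?_ hstep
  rw [Finset.sum_ite, Finset.sum_const, Finset.sum_const, smul_eq_mul, smul_eq_mul]
  have hpow : 2 ^ (R / 3 + 1) = 2 * 2 ^ (R / 3) := by ring
  have hsplit' : (Finset.univ.filter fun x => p x).card
      + (Finset.univ.filter fun x => ¬ p x).card = 2 ^ (R / 3) := hsplit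
  have hG1' : (Finset.univ.filter fun x => p x).card ≤ 1 := hG1
  omega


open scoped ENNReal in
/-- Yao-style lower bound for randomized online algorithms: for every probability
mass function `μ` over deterministic online algorithms there is a subset `B` such
that the expected congestion (over `A` drawn from `μ`) of the routing induced by
`A` on the supersequence `S_B` is at least `2 − 1/2^S`, where `S = ⌊R/3⌋`. -/
theorem online_randomized_lower_bound {n R : ℕ} (hn : 1 ≤ n) (hR : 3 ≤ R)
    (μ : PMF (List (UFlow (2 * n) R) → Fin (2 * n))) :
    ∃ B : Finset (Fin (R / 3)),
      2 - 1 / 2 ^ (R / 3) ≤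
        ∑' A : List (UFlow (2 * n) R) → Fin (2 * n),
          μ A * (congA A (seqB n R B) : ℝ≥0∞) := by
  classical
  set f : Finset (Fin (R / 3)) → ℝ≥0∞ :=
    fun B => ∑' A, μ A * (congA A (seqB n R B) : ℝ≥0∞) with hf
  have hpow_ne_top : ((2 : ℝ≥0∞) ^ (R / 3)) ≠ ⊤ := ENNReal.pow_ne_top ENNReal.ofNat_ne_top
  have hpow_ne_zero : ((2 : ℝ≥0∞) ^ (R / 3)) ≠ 0 := pow_ne_zero _ two_ne_zero
  have key1 : ∀ A, ((2 : ℝ≥0∞) ^ (R / 3 + 1) - 1) ≤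
      ∑ B : Finset (Fin (R / 3)), (congA A (seqB n R B) : ℝ≥0∞) := by
    intro A
    have h := sum_bound hn hR A
    have hcast : ((2 ^ (R / 3 + 1) - 1 : ℕ) : ℝ≥0∞) = 2 ^ (R / 3 + 1) - 1 := by
      rw [ENNReal.natCast_sub]
      push_cast
      ring_nf
    rw [← hcast, ← Nat.cast_sum]
    exact Nat.cast_le.2 h
  have main : ((2 : ℝ≥0∞) ^ (R / 3 + 1) - 1) ≤ ∑ B : Finset (Fin (R / 3)), f B := by
    have hswap : ∑ B : Finset (Fin (R / 3)), f B =
        ∑' A, ∑ B : Finset (Fin (R / 3)), μ A * (congA A (seqB n R B) : ℝ≥0∞) :=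
      (Summable.tsum_finsetSum (fun B _ => ENNReal.summable)).symm
    rw [hswap]
    calc ((2 : ℝ≥0∞) ^ (R / 3 + 1) - 1)
        = ∑' A : List (UFlow (2 * n) R) → Fin (2 * n),
            μ A * ((2 : ℝ≥0∞) ^ (R / 3 + 1) - 1) := by
          rw [ENNReal.tsum_mul_right, μ.tsum_coe, one_mul]
      _ ≤ ∑' A, μ A * ∑ B : Finset (Fin (R / 3)), (congA A (seqB n R B) : ℝ≥0∞) :=
          ENNReal.tsum_le_tsum (fun A => mul_le_mul_right (key1 A) _)
      _ = ∑' A, ∑ B : Finset (Fin (R / 3)), μ A * (congA A (seqB n R B) : ℝ≥0∞) :=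
          tsum_congr (fun A => Finset.mul_sum _ _ _)
  obtain ⟨B, -, hB⟩ := Finset.exists_mem_eq_sup Finset.univ Finset.univ_nonempty f
  refine ⟨B, ?_⟩
  show (2 : ℝ≥0∞) - 1 / 2 ^ (R / 3) ≤ f B
  rw [← hB]
  have hsum_le : ∑ B : Finset (Fin (R / 3)), f B ≤
      (2 : ℝ≥0∞) ^ (R / 3) * Finset.univ.sup f := by
    have := Finset.sum_le_card_nsmul Finset.univ f (Finset.univ.sup f)
      (fun x _ => Finset.le_sup (Finset.mem_univ x))
    rw [nsmul_eq_mul] at this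
    refine le_trans this (le_of_eq ?_)
    congr 1
    rw [Finset.card_univ, Fintype.card_finset, Fintype.card_fin]
    push_cast
    ring
  have hfactor : (2 : ℝ≥0∞) ^ (R / 3) * (2 - 1 / 2 ^ (R / 3)) =
      2 ^ (R / 3 + 1) - 1 := by
    rw [ENNReal.mul_sub (fun _ _ => hpow_ne_top), pow_succ]
    congr 1
    rw [one_div, ENNReal.mul_inv_cancel hpow_ne_zero hpow_ne_top]
  have hle : (2 : ℝ≥0∞) ^ (R / 3) * (2 - 1 / 2 ^ (R / 3)) ≤
      (2 : ℝ≥0∞) ^ (R / 3) * Finset.univ.sup f := by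
    rw [hfactor]
    exact le_trans main hsum_le
  exact (ENNReal.mul_le_mul_iff_right hpow_ne_zero hpow_ne_top).1 hle
end

section
/- Let (f_1,…,f_T) be a finite sequence of flows in C_{N,R}, each of demand 1, such that at most one flow leaves each source and at most one flow enters each destination. Let r be any greedy routing: for each t, r(f_t) is a middle switch m minimizing max(c_t(I_{i(f_t)} M_m), c_t(M_m O_{j(f_t)})), where c_t denotes the link congestions determined by the assignments of f_1,…,f_{t−1}. Then the congestion of r is at most 2. -/
open Finset

/-- Number of flows at positions strictly before `t` whose input switch is `i` and
which `r` assigns to middle switch `mm`: the congestion of link `I_i M_mm` just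
before flow `t` is routed. -/
def inBefore {N R : ℕ} (L : List (UFlow N R)) (r : Fin L.length → Fin N)
    (t : Fin L.length) (i : Fin R) (mm : Fin N) : ℕ :=
  (Finset.univ.filter fun t' : Fin L.length =>
    t'.1 < t.1 ∧ (L.get t').inp = i ∧ r t' = mm).card

/-- Number of flows at positions strictly before `t` whose output switch is `i` and
which `r` assigns to middle switch `mm`: the congestion of link `M_mm O_i` just
before flow `t` is routed. -/
def outBefore {N R : ℕ} (L : List (UFlow N R)) (r : Fin L.length → Fin N)
    (t : Fin L.length) (i : Fin R) (mm : Fin N) : ℕ :=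
  (Finset.univ.filter fun t' : Fin L.length =>
    t'.1 < t.1 ∧ (L.get t').out = i ∧ r t' = mm).card

lemma exists_max_elt {n k : ℕ} (S : Finset (Fin n)) (h : k + 1 ≤ S.card) :
    ∃ t ∈ S, k ≤ (S.filter fun t' => t'.1 < t.1).card := by
  have hne : S.Nonempty := Finset.card_pos.mp (by omega)
  refine ⟨S.max' hne, S.max'_mem hne, ?_⟩
  have hsub : S.erase (S.max' hne) ⊆ S.filter fun t' => t'.1 < (S.max' hne).1 := by
    intro s hs
    simp only [Finset.mem_erase] at hs
    exact Finset.mem_filter.mpr ⟨hs.2,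
      Fin.lt_iff_val_lt_val.mp (lt_of_le_of_ne (S.le_max' s hs.2) hs.1)⟩
  calc k ≤ S.card - 1 := by omega
    _ = (S.erase (S.max' hne)).card := (Finset.card_erase_of_mem (S.max'_mem hne)).symm
    _ ≤ _ := Finset.card_le_card hsub

lemma card_inp_le {N R : ℕ} (L : List (UFlow N R))
    (hsrc : ∀ t t' : Fin L.length, (L.get t).inp = (L.get t').inp →
      (L.get t).src = (L.get t').src → t = t') (i : Fin R) :
    (Finset.univ.filter fun t : Fin L.length => (L.get t).inp = i).card ≤ N := by
  have hinj : Set.InjOn (fun t => (L.get t).src)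
      ((Finset.univ.filter fun t : Fin L.length => (L.get t).inp = i) : Finset _) := by
    intro a ha b hb hab
    simp only [Finset.mem_coe, Finset.mem_filter, Finset.mem_univ, true_and] at ha hb
    exact hsrc a b (ha.trans hb.symm) hab
  have := Finset.card_le_card_of_injOn (fun t => (L.get t).src)
    (fun t _ => Finset.mem_univ (α := Fin N) _) hinj
  exact this.trans (by simp)

lemma card_out_le {N R : ℕ} (L : List (UFlow N R))
    (hdst : ∀ t t' : Fin L.length, (L.get t).out = (L.get t').out →
      (L.get t).dst = (L.get t').dst → t = t') (i : Fin R) :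
    (Finset.univ.filter fun t : Fin L.length => (L.get t).out = i).card ≤ N := by
  have hinj : Set.InjOn (fun t => (L.get t).dst)
      ((Finset.univ.filter fun t : Fin L.length => (L.get t).out = i) : Finset _) := by
    intro a ha b hb hab
    simp only [Finset.mem_coe, Finset.mem_filter, Finset.mem_univ, true_and] at ha hb
    exact hdst a b (ha.trans hb.symm) hab
  have := Finset.card_le_card_of_injOn (fun t => (L.get t).dst)
    (fun t _ => Finset.mem_univ (α := Fin N) _) hinj
  exact this.trans (by simp)

lemma core_contradiction {N R : ℕ} (L : List (UFlow N R))
    (hsrc : ∀ t t' : Fin L.length, (L.get t).inp = (L.get t').inp →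
      (L.get t).src = (L.get t').src → t = t')
    (hdst : ∀ t t' : Fin L.length, (L.get t).out = (L.get t').out →
      (L.get t).dst = (L.get t').dst → t = t')
    (r : Fin L.length → Fin N) (t : Fin L.length)
    (h2 : ∀ mm : Fin N,
      2 ≤ max (inBefore L r t (L.get t).inp mm) (outBefore L r t (L.get t).out mm)) :
    False := by
  set i := (L.get t).inp with hi
  set j := (L.get t).out with hj
  set Bin := Finset.univ.filter fun t' : Fin L.length =>
    t'.1 < t.1 ∧ (L.get t').inp = i with hBin_def
  set Bout := Finset.univ.filter fun t' : Fin L.length =>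
    t'.1 < t.1 ∧ (L.get t').out = j with hBout_def
  have hin_sum : ∑ mm : Fin N, inBefore L r t i mm = Bin.card := by
    rw [Finset.card_eq_sum_card_fiberwise (f := r) (t := Finset.univ)
      (fun x _ => Finset.mem_univ _)]
    refine Finset.sum_congr rfl fun mm _ => ?_
    unfold inBefore
    congr 1
    rw [hBin_def, Finset.filter_filter]
    exact Finset.filter_congr fun x _ => by tauto
  have hout_sum : ∑ mm : Fin N, outBefore L r t j mm = Bout.card := by
    rw [Finset.card_eq_sum_card_fiberwise (f := r) (t := Finset.univ)
      (fun x _ => Finset.mem_univ _)]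
    refine Finset.sum_congr rfl fun mm _ => ?_
    unfold outBefore
    congr 1
    rw [hBout_def, Finset.filter_filter]
    exact Finset.filter_congr fun x _ => by tauto
  have hBin_card : Bin.card + 1 ≤ N := by
    have ht : t ∉ Bin := by simp [hBin_def]
    have hsub : insert t Bin ⊆ Finset.univ.filter fun t' => (L.get t').inp = i := by
      intro x hx
      rcases Finset.mem_insert.mp hx with rfl | hx
      · simpa using hi.symm
      · simp only [hBin_def, Finset.mem_filter] at hx ⊢
        exact ⟨Finset.mem_univ _, hx.2.2⟩
    have h1 := Finset.card_le_card hsub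
    rw [Finset.card_insert_of_notMem ht] at h1
    have h2' := card_inp_le L hsrc i
    omega
  have hBout_card : Bout.card + 1 ≤ N := by
    have ht : t ∉ Bout := by simp [hBout_def]
    have hsub : insert t Bout ⊆ Finset.univ.filter fun t' => (L.get t').out = j := by
      intro x hx
      rcases Finset.mem_insert.mp hx with rfl | hx
      · simpa using hj.symm
      · simp only [hBout_def, Finset.mem_filter] at hx ⊢
        exact ⟨Finset.mem_univ _, hx.2.2⟩
    have h1 := Finset.card_le_card hsub
    rw [Finset.card_insert_of_notMem ht] at h1
    have h2' := card_out_le L hdst j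
    omega
  have hsum : ∑ _mm : Fin N, (2 : ℕ) ≤
      ∑ mm : Fin N, (inBefore L r t i mm + outBefore L r t j mm) :=
    Finset.sum_le_sum fun mm _ => le_trans (h2 mm)
      (max_le (Nat.le_add_right _ _) (Nat.le_add_left _ _))
  rw [Finset.sum_add_distrib, hin_sum, hout_sum, Finset.sum_const, Finset.card_univ,
    Fintype.card_fin, smul_eq_mul] at hsum
  omega

/-- Any greedy routing of a sequence of unit-demand flows with at most one flow per
source and at most one flow per destination has congestion at most `2`: each flow is
assigned to a middle switch minimizing the maximum congestion, over its two links, of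
its path, and then every link carries at most `2` flows. -/
theorem greedy_unit_demand_congestion_le_two {N R : ℕ}
    (L : List (UFlow N R))
    (hsrc : ∀ t t' : Fin L.length, (L.get t).inp = (L.get t').inp →
      (L.get t).src = (L.get t').src → t = t')
    (hdst : ∀ t t' : Fin L.length, (L.get t).out = (L.get t').out →
      (L.get t).dst = (L.get t').dst → t = t')
    (r : Fin L.length → Fin N)
    (hgreedy : ∀ (t : Fin L.length) (mm : Fin N),
      max (inBefore L r t (L.get t).inp (r t)) (outBefore L r t (L.get t).out (r t))
        ≤ max (inBefore L r t (L.get t).inp mm) (outBefore L r t (L.get t).out mm)) :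
    ∀ (i : Fin R) (mm : Fin N),
      (Finset.univ.filter fun t : Fin L.length =>
        (L.get t).inp = i ∧ r t = mm).card ≤ 2 ∧
      (Finset.univ.filter fun t : Fin L.length =>
        (L.get t).out = i ∧ r t = mm).card ≤ 2 := by

  intro i mm
  constructor
  · by_contra hcon
    push_neg at hcon
    obtain ⟨t, ht, hcard⟩ := exists_max_elt (k := 2)
      (Finset.univ.filter fun t : Fin L.length => (L.get t).inp = i ∧ r t = mm)
      (by omega)
    simp only [Finset.mem_filter, Finset.mem_univ, true_and] at ht
    obtain ⟨hti, htr⟩ := ht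
    have hbefore : 2 ≤ inBefore L r t (L.get t).inp (r t) := by
      rw [hti, htr]
      have heq : inBefore L r t i mm =
          ((Finset.univ.filter fun t' : Fin L.length =>
            (L.get t').inp = i ∧ r t' = mm).filter fun t' => t'.1 < t.1).card := by
        unfold inBefore
        congr 1
        rw [Finset.filter_filter]
        exact Finset.filter_congr fun x _ => by tauto
      rw [heq]; exact hcard
    exact core_contradiction L hsrc hdst r t fun mm' =>
      le_trans (le_trans hbefore (le_max_left _ _)) (hgreedy t mm')
  · by_contra hcon
    push_neg at hcon
    obtain ⟨t, ht, hcard⟩ := exists_max_elt (k := 2)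
      (Finset.univ.filter fun t : Fin L.length => (L.get t).out = i ∧ r t = mm)
      (by omega)
    simp only [Finset.mem_filter, Finset.mem_univ, true_and] at ht
    obtain ⟨hti, htr⟩ := ht
    have hbefore : 2 ≤ outBefore L r t (L.get t).out (r t) := by
      rw [hti, htr]
      have heq : outBefore L r t i mm =
          ((Finset.univ.filter fun t' : Fin L.length =>
            (L.get t').out = i ∧ r t' = mm).filter fun t' => t'.1 < t.1).card := by
        unfold outBefore
        congr 1
        rw [Finset.filter_filter]
        exact Finset.filter_congr fun x _ => by tauto
      rw [heq]; exact hcard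
    exact core_contradiction L hsrc hdst r t fun mm' =>
      le_trans (le_trans hbefore (le_max_right _ _)) (hgreedy t mm')
end
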